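/- arXiv:2511.02189 — 6 statements merged into one kernel-verified Lean document; each statement's English description precedes it below -/
import Mathlib

section
/- There exists a time τ* in the interval [0, √(r_rx² + r_tx² + 4·r_rx·r_tx)/c] such that F(τ*) = 0; i.e., the wavefront-arrival equation for the moving receiver satellite always admits a feasible solution in this finite interval. -/
open Real

lemma trig_bound (a b p : ℝ) :
    |Real.sin a * Real.sin b * Real.cos p + Real.cos a * Real.cos b| ≤ 1 := by
  have h1 : |Real.sin a * Real.sin b * Real.cos p + Real.cos a * Real.cos b|
      ≤ |Real.sin a| * |Real.sin b| + |Real.cos a| * |Real.cos b| := by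
    calc _ ≤ |Real.sin a * Real.sin b * Real.cos p| + |Real.cos a * Real.cos b| :=
            abs_add_le _ _
      _ = |Real.sin a| * |Real.sin b| * |Real.cos p| + |Real.cos a| * |Real.cos b| := by
            rw [abs_mul, abs_mul, abs_mul]
      _ ≤ |Real.sin a| * |Real.sin b| * 1 + |Real.cos a| * |Real.cos b| := by
            gcongr
            exact abs_cos_le_one p
      _ = _ := by ring
  have h2 : |Real.sin a| * |Real.sin b| + |Real.cos a| * |Real.cos b| ≤ 1 := by
    nlinarith [sq_nonneg (|Real.sin a| * |Real.cos b| - |Real.cos a| * |Real.sin b|),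
      sq_abs (Real.sin a), sq_abs (Real.cos a), sq_abs (Real.sin b), sq_abs (Real.cos b),
      sin_sq_add_cos_sq a, sin_sq_add_cos_sq b,
      sq_nonneg (|Real.sin a| * |Real.sin b| + |Real.cos a| * |Real.cos b|),
      abs_nonneg (Real.sin a), abs_nonneg (Real.sin b), abs_nonneg (Real.cos a), abs_nonneg (Real.cos b)]
  linarith


/-- **Theorem 1 (feasible arrival time).** For positive radii and signal speed,
the wavefront-arrival function
`F(τ) = r_rx² + r_tx² + 2 r_rx r_tx (sin(θ_rx+ω_rx τ) sin θ_tx cos(ψ_rx−ψ_tx)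
        + cos(θ_rx+ω_rx τ) cos θ_tx) − c² τ²`
has a root `τ*` in the interval `[0, √(r_rx² + r_tx² + 4 r_rx r_tx)/c]`. -/
theorem exists_feasible_arrival_time
    (r_rx r_tx c : ℝ) (hrx : 0 < r_rx) (htx : 0 < r_tx) (hc : 0 < c)
    (θ_rx θ_tx ψ_rx ψ_tx ω_rx : ℝ)
    (hθrx : θ_rx ∈ Set.Icc 0 π) (hθtx : θ_tx ∈ Set.Icc 0 π)
    (F : ℝ → ℝ)
    (hF : ∀ τ, F τ = r_rx ^ 2 + r_tx ^ 2 +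
      2 * r_rx * r_tx *
        (Real.sin (θ_rx + ω_rx * τ) * Real.sin θ_tx * Real.cos (ψ_rx - ψ_tx)
          + Real.cos (θ_rx + ω_rx * τ) * Real.cos θ_tx)
      - c ^ 2 * τ ^ 2) :
    ∃ τ ∈ Set.Icc (0 : ℝ)
        (Real.sqrt (r_rx ^ 2 + r_tx ^ 2 + 4 * r_rx * r_tx) / c),
      F τ = 0 := by
  set S : ℝ := r_rx ^ 2 + r_tx ^ 2 + 4 * r_rx * r_tx with hS
  have hSpos : 0 < S := by positivity
  set T : ℝ := Real.sqrt S / c with hT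
  have hTpos : 0 ≤ T := by positivity
  have hcT : c ^ 2 * T ^ 2 = S := by
    rw [hT, div_pow, sq_sqrt hSpos.le]
    field_simp
  have hcont : ContinuousOn F (Set.Icc 0 T) := by
    have : Continuous F := by
      have : F = fun τ => r_rx ^ 2 + r_tx ^ 2 +
        2 * r_rx * r_tx *
          (Real.sin (θ_rx + ω_rx * τ) * Real.sin θ_tx * Real.cos (ψ_rx - ψ_tx)
            + Real.cos (θ_rx + ω_rx * τ) * Real.cos θ_tx)
        - c ^ 2 * τ ^ 2 := funext hF
      rw [this]; fun_prop
    exact this.continuousOn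
  have hF0 : 0 ≤ F 0 := by
    have hb := trig_bound (θ_rx + ω_rx * 0) θ_tx (ψ_rx - ψ_tx)
    rw [abs_le] at hb
    rw [hF 0]
    nlinarith [hb.1, sq_nonneg (r_rx - r_tx)]
  have hFT : F T ≤ 0 := by
    have hb := trig_bound (θ_rx + ω_rx * T) θ_tx (ψ_rx - ψ_tx)
    rw [abs_le] at hb
    rw [hF T, hcT]
    nlinarith [hb.2, mul_pos hrx htx]
  have := intermediate_value_Icc' hTpos hcont
  have h0 : (0:ℝ) ∈ Set.Icc (F T) (F 0) := ⟨hFT, hF0⟩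
  obtain ⟨τ, hτ, hτ0⟩ := this h0
  exact ⟨τ, hτ, hτ0⟩
end

section
/- For every x with 0 < x ≤ A0, letting R_x = √((ω²/2)·ln(A0/x)), the tail probability of the Rician pointing-error radius equals the integral of the channel-gain density: ∫_{R_x}^∞ f_r(r) dr = ∫_0^x f_h(t) dt. (Equivalently, under the gain map r ↦ A0·exp(−2r²/ω²), the Rician radial pointing error induces the channel gain density f_h on (0, A0].) -/
/-!
The gain map `g(r) = A0 exp(-2r²/ω²)` is a strictly decreasing bijection from `(R_x, ∞)`
onto `(0, x)` whose inverse is `t ↦ √((ω²/2) ln(A0/t))`. Since `|g'(r)| = (4r/ω²) g(r)`, the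
change-of-variables formula turns `∫_{(0,x)} f_h` into `∫_{(R_x,∞)} |g'| · f_h ∘ g`, and
`|g'| · f_h ∘ g = f_r` pointwise: `4γ²/ω² = 1/(ℓ²σ²)`, `(g(r)/A0)^{γ²} = exp(-r²/(2ℓ²σ²))`,
and the two Bessel factors have the same argument because the inverse map returns `r`.
Hence the identity holds for any function in place of `I0`.
-/

open Real MeasureTheory Set

noncomputable section

def gainMap (A0 ω r : ℝ) : ℝ := A0 * exp (-(2 * r ^ 2 / ω ^ 2))

def gainRadius (A0 ω t : ℝ) : ℝ := √((ω ^ 2 / 2) * log (A0 / t))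

def ricianPdf (ℓ σ s : ℝ) (I0 : ℝ → ℝ) (r : ℝ) : ℝ :=
  r / (ℓ ^ 2 * σ ^ 2) * exp (-((r ^ 2 + s ^ 2) / (2 * ℓ ^ 2 * σ ^ 2)))
    * I0 (r * s / (ℓ ^ 2 * σ ^ 2))

def gainPdf (A0 ω ℓ σ s : ℝ) (I0 : ℝ → ℝ) (t : ℝ) : ℝ :=
  (ω / (2 * ℓ * σ)) ^ 2 / A0 ^ ((ω / (2 * ℓ * σ)) ^ 2)
    * exp (-(s ^ 2 / (2 * ℓ ^ 2 * σ ^ 2))) * t ^ ((ω / (2 * ℓ * σ)) ^ 2 - 1)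
    * I0 (s / (ℓ ^ 2 * σ ^ 2) * gainRadius A0 ω t)

end

section GainMap

variable {A0 ω : ℝ}

theorem gainMap_pos (hA0 : 0 < A0) (r : ℝ) : 0 < gainMap A0 ω r := by
  unfold gainMap; positivity

theorem gainMap_le (hA0 : 0 ≤ A0) (r : ℝ) : gainMap A0 ω r ≤ A0 := by
  unfold gainMap
  exact mul_le_of_le_one_right hA0 (exp_le_one_iff.mpr (neg_nonpos.mpr (by positivity)))

theorem hasDerivAt_gainMap (r : ℝ) :
    HasDerivAt (gainMap A0 ω) (-(4 * r / ω ^ 2) * gainMap A0 ω r) r := by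
  have hinner : HasDerivAt (fun x => -(2 * x ^ 2 / ω ^ 2)) (-(4 * r / ω ^ 2)) r := by
    refine (((hasDerivAt_pow 2 r).const_mul 2).div_const (ω ^ 2)).neg.congr_deriv ?_
    push_cast; ring
  exact (hinner.exp.const_mul A0).congr_deriv (by unfold gainMap; ring)

theorem strictAntiOn_gainMap (hA0 : 0 < A0) (hω : ω ≠ 0) :
    StrictAntiOn (gainMap A0 ω) (Ici 0) := by
  intro a ha b _ hab
  have hsq : a ^ 2 < b ^ 2 := pow_lt_pow_left₀ hab ha two_ne_zero
  have hexp : -(2 * b ^ 2 / ω ^ 2) < -(2 * a ^ 2 / ω ^ 2) := by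
    have hω2 : 0 < ω ^ 2 := by positivity
    rw [neg_lt_neg_iff]; gcongr
  exact mul_lt_mul_of_pos_left (exp_lt_exp.mpr hexp) hA0

theorem gainMap_gainRadius (hω : ω ≠ 0) {t : ℝ} (ht : 0 < t) (htA : t ≤ A0) :
    gainMap A0 ω (gainRadius A0 ω t) = t := by
  have hA0 : 0 < A0 := ht.trans_le htA
  have hlog : 0 ≤ log (A0 / t) := log_nonneg ((one_le_div ht).mpr htA)
  unfold gainMap gainRadius
  rw [sq_sqrt (by positivity)]
  have hexp : -(2 * ((ω ^ 2 / 2) * log (A0 / t)) / ω ^ 2) = -log (A0 / t) := by field_simp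
  rw [hexp, exp_neg, exp_log (by positivity)]
  field_simp

theorem gainRadius_gainMap (hA0 : 0 < A0) (hω : ω ≠ 0) {r : ℝ} (hr : 0 ≤ r) :
    gainRadius A0 ω (gainMap A0 ω r) = r := by
  have hdiv : A0 / gainMap A0 ω r = exp (2 * r ^ 2 / ω ^ 2) := by
    unfold gainMap; rw [exp_neg]; field_simp
  unfold gainRadius
  rw [hdiv, log_exp]
  have hsq : ω ^ 2 / 2 * (2 * r ^ 2 / ω ^ 2) = r ^ 2 := by field_simp
  rw [hsq, sqrt_sq hr]

theorem image_gainMap_Ioi (hA0 : 0 < A0) (hω : ω ≠ 0) {R : ℝ} (hR : 0 ≤ R) :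
    gainMap A0 ω '' Ioi R = Ioo 0 (gainMap A0 ω R) := by
  have hanti := strictAntiOn_gainMap hA0 hω
  ext t
  constructor
  · rintro ⟨r, hr, rfl⟩
    exact ⟨gainMap_pos hA0 r, hanti hR (hR.trans (le_of_lt hr)) hr⟩
  · rintro ⟨ht, htR⟩
    have htA : t ≤ A0 := htR.le.trans (gainMap_le hA0.le R)
    refine ⟨gainRadius A0 ω t, ?_, gainMap_gainRadius hω ht htA⟩
    by_contra hle
    have hge : gainMap A0 ω R ≤ gainMap A0 ω (gainRadius A0 ω t) :=
      (hanti.le_iff_ge hR (sqrt_nonneg _)).mpr (not_lt.mp hle)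
    rw [gainMap_gainRadius hω ht htA] at hge
    exact hge.not_gt htR

theorem setIntegral_Ioi_gainMap (hA0 : 0 < A0) (hω : ω ≠ 0) {R : ℝ} (hR : 0 ≤ R)
    (f : ℝ → ℝ) :
    ∫ r in Ioi R, 4 * r / ω ^ 2 * gainMap A0 ω r * f (gainMap A0 ω r)
      = ∫ t in Ioo 0 (gainMap A0 ω R), f t := by
  have hinj : InjOn (gainMap A0 ω) (Ioi R) :=
    (strictAntiOn_gainMap hA0 hω).injOn.mono fun r hr => hR.trans (le_of_lt hr)
  rw [← image_gainMap_Ioi hA0 hω hR,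
    integral_image_eq_integral_abs_deriv_smul measurableSet_Ioi
      (fun r _ => (hasDerivAt_gainMap r).hasDerivWithinAt) hinj]
  refine setIntegral_congr_fun measurableSet_Ioi fun r hr => ?_
  have hr : 0 ≤ r := hR.trans (le_of_lt hr)
  rw [smul_eq_mul, abs_mul, abs_neg, abs_of_nonneg (by positivity),
    abs_of_pos (gainMap_pos hA0 r)]

end GainMap

theorem ricianPdf_eq_mul_gainPdf_gainMap {A0 ω ℓ σ : ℝ} (hA0 : 0 < A0) (hω : ω ≠ 0)
    (hℓ : ℓ ≠ 0) (hσ : σ ≠ 0) (s : ℝ) (I0 : ℝ → ℝ) {r : ℝ} (hr : 0 ≤ r) :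
    ricianPdf ℓ σ s I0 r
      = 4 * r / ω ^ 2 * gainMap A0 ω r * gainPdf A0 ω ℓ σ s I0 (gainMap A0 ω r) := by
  unfold ricianPdf gainPdf
  rw [gainRadius_gainMap hA0 hω hr]
  set k := (ω / (2 * ℓ * σ)) ^ 2
  set t := gainMap A0 ω r
  have ht : 0 < t := gainMap_pos hA0 r
  have hpow : t ^ k / A0 ^ k = exp (-(r ^ 2 / (2 * ℓ ^ 2 * σ ^ 2))) := by
    rw [← div_rpow ht.le hA0.le, show t / A0 = exp (-(2 * r ^ 2 / ω ^ 2)) by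
      simp only [t, gainMap]; field_simp, ← exp_mul]
    congr 1
    simp only [k]; field_simp
  have hexp : exp (-((r ^ 2 + s ^ 2) / (2 * ℓ ^ 2 * σ ^ 2)))
      = t ^ k / A0 ^ k * exp (-(s ^ 2 / (2 * ℓ ^ 2 * σ ^ 2))) := by
    rw [hpow, ← exp_add]; ring_nf
  have hk : r / (ℓ ^ 2 * σ ^ 2) = 4 * r / ω ^ 2 * k := by
    simp only [k]; field_simp; ring
  clear_value k t
  rw [hexp, hk, rpow_sub_one ht.ne', mul_comm (s / _) r, mul_div_assoc r s]
  field_simp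

theorem rician_tail_eq_gain_cdf_general
    (A0 ω ℓ σ s : ℝ) (hA0 : 0 < A0) (hω : 0 < ω) (hℓ : 0 < ℓ) (hσ : 0 < σ)
    (γ ν : ℝ) (hγ : γ = ω / (2 * ℓ * σ)) (hν : ν = s ^ 2 / (2 * ℓ ^ 2 * σ ^ 2))
    (I0 fr fh : ℝ → ℝ)
    (hfr : ∀ r, 0 ≤ r → fr r =
      (r / (ℓ ^ 2 * σ ^ 2)) * Real.exp (-((r ^ 2 + s ^ 2) / (2 * ℓ ^ 2 * σ ^ 2)))
        * I0 (r * s / (ℓ ^ 2 * σ ^ 2)))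
    (hfh : ∀ t, 0 < t → t ≤ A0 → fh t =
      (γ ^ 2 / A0 ^ (γ ^ 2)) * Real.exp (-ν) * t ^ (γ ^ 2 - 1)
        * I0 ((s / (ℓ ^ 2 * σ ^ 2)) * Real.sqrt ((ω ^ 2 / 2) * Real.log (A0 / t)))) :
    ∀ x, 0 < x → x ≤ A0 →
      (∫ r in Set.Ioi (Real.sqrt ((ω ^ 2 / 2) * Real.log (A0 / x))), fr r)
        = ∫ t in (0 : ℝ)..x, fh t := by
  intro x hx hxA
  subst hγ hν
  have hR : 0 ≤ gainRadius A0 ω x := sqrt_nonneg _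
  calc (∫ r in Ioi (gainRadius A0 ω x), fr r)
      = ∫ r in Ioi (gainRadius A0 ω x),
          4 * r / ω ^ 2 * gainMap A0 ω r * fh (gainMap A0 ω r) := by
        refine setIntegral_congr_fun measurableSet_Ioi fun r hr => ?_
        have hr : 0 ≤ r := hR.trans (le_of_lt hr)
        rw [hfr r hr, hfh _ (gainMap_pos hA0 r) (gainMap_le hA0.le r)]
        exact ricianPdf_eq_mul_gainPdf_gainMap hA0 hω.ne' hℓ.ne' hσ.ne' s I0 hr
    _ = ∫ t in Ioo 0 x, fh t := by
        rw [setIntegral_Ioi_gainMap hA0 hω.ne' hR, gainMap_gainRadius hω.ne' hx hxA]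
    _ = ∫ t in (0 : ℝ)..x, fh t := by
        rw [intervalIntegral.integral_of_le hx.le, integral_Ioc_eq_integral_Ioo]

/-- Under the Gaussian-beam gain map `r ↦ A0 exp(−2r²/ω²)`, the Rician radial
pointing error induces the channel-gain density `f_h` on `(0, A0]`: for every
`0 < x ≤ A0`, with `R_x = √((ω²/2) ln(A0/x))`,
`∫_{R_x}^∞ f_r = ∫_0^x f_h`. -/
theorem rician_tail_eq_gain_cdf
    (A0 ω ℓ σ s : ℝ) (hA0 : 0 < A0) (hω : 0 < ω) (hℓ : 0 < ℓ) (hσ : 0 < σ)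
    (hs : 0 ≤ s)
    (γ ν : ℝ) (hγ : γ = ω / (2 * ℓ * σ)) (hν : ν = s ^ 2 / (2 * ℓ ^ 2 * σ ^ 2))
    (I0 fr fh : ℝ → ℝ)
    (hI0 : ∀ p, I0 p = ∑' n : ℕ, (p / 2) ^ (2 * n) / ((n.factorial : ℝ)) ^ 2)
    (hfr : ∀ r, 0 ≤ r → fr r =
      (r / (ℓ ^ 2 * σ ^ 2)) * Real.exp (-((r ^ 2 + s ^ 2) / (2 * ℓ ^ 2 * σ ^ 2)))
        * I0 (r * s / (ℓ ^ 2 * σ ^ 2)))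
    (hfh : ∀ t, 0 < t → t ≤ A0 → fh t =
      (γ ^ 2 / A0 ^ (γ ^ 2)) * Real.exp (-ν) * t ^ (γ ^ 2 - 1)
        * I0 ((s / (ℓ ^ 2 * σ ^ 2)) * Real.sqrt ((ω ^ 2 / 2) * Real.log (A0 / t)))) :
    ∀ x, 0 < x → x ≤ A0 →
      (∫ r in Set.Ioi (Real.sqrt ((ω ^ 2 / 2) * Real.log (A0 / x))), fr r)
        = ∫ t in (0 : ℝ)..x, fh t :=
  rician_tail_eq_gain_cdf_general A0 ω ℓ σ s hA0 hω hℓ hσ γ ν hγ hν I0 fr fh hfr hfh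
end

section
/- For every t with 0 < t < A0, letting R_t = √((ω²/2)·ln(A0/t)), the change-of-variables identity f_r(R_t)·(ω²/(4·t·R_t)) = f_h(t) holds; i.e., the Rician pointing-error density evaluated at the inverse gain map, multiplied by the Jacobian factor ω²/(4·t·R_t), equals the channel-gain density in closed form. -/
open Real MeasureTheory

/-- Change-of-variables identity for the channel-gain density: for every
`0 < t < A0`, with `R_t = √((ω²/2) ln(A0/t))`, the Rician density evaluated at
the inverse gain map times the Jacobian factor `ω²/(4 t R_t)` equals `f_h(t)`. -/
theorem rician_change_of_variables_density
    (A0 ω ℓ σ s : ℝ) (hA0 : 0 < A0) (hω : 0 < ω) (hℓ : 0 < ℓ) (hσ : 0 < σ)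
    (hs : 0 ≤ s)
    (γ ν : ℝ) (hγ : γ = ω / (2 * ℓ * σ)) (hν : ν = s ^ 2 / (2 * ℓ ^ 2 * σ ^ 2))
    (I0 fr fh : ℝ → ℝ)
    (hI0 : ∀ p, I0 p = ∑' n : ℕ, (p / 2) ^ (2 * n) / ((n.factorial : ℝ)) ^ 2)
    (hfr : ∀ r, 0 ≤ r → fr r =
      (r / (ℓ ^ 2 * σ ^ 2)) * Real.exp (-((r ^ 2 + s ^ 2) / (2 * ℓ ^ 2 * σ ^ 2)))
        * I0 (r * s / (ℓ ^ 2 * σ ^ 2)))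
    (hfh : ∀ t, 0 < t → t ≤ A0 → fh t =
      (γ ^ 2 / A0 ^ (γ ^ 2)) * Real.exp (-ν) * t ^ (γ ^ 2 - 1)
        * I0 ((s / (ℓ ^ 2 * σ ^ 2)) * Real.sqrt ((ω ^ 2 / 2) * Real.log (A0 / t)))) :
    ∀ t, 0 < t → t < A0 →
      fr (Real.sqrt ((ω ^ 2 / 2) * Real.log (A0 / t)))
          * (ω ^ 2 / (4 * t * Real.sqrt ((ω ^ 2 / 2) * Real.log (A0 / t))))
        = fh t := by
  intro t ht htA
  have hℓσ : (0:ℝ) < ℓ ^ 2 * σ ^ 2 := by positivity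
  have hL : 0 < Real.log (A0 / t) := Real.log_pos (by rw [lt_div_iff₀ ht]; linarith)
  set L := Real.log (A0 / t) with hLdef
  have hRarg : 0 ≤ ω ^ 2 / 2 * L := by positivity
  set R := Real.sqrt (ω ^ 2 / 2 * L) with hRdef
  have hR : 0 < R := Real.sqrt_pos.2 (by positivity)
  have hR2 : R ^ 2 = ω ^ 2 / 2 * L := Real.sq_sqrt hRarg
  rw [hfr R hR.le, hfh t ht htA.le, ← hLdef, ← hRdef]
  clear_value L R
  rw [show R * s / (ℓ ^ 2 * σ ^ 2) = s / (ℓ ^ 2 * σ ^ 2) * R from by ring]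
  have h1 : -((R ^ 2 + s ^ 2) / (2 * ℓ ^ 2 * σ ^ 2)) = L * (-(γ ^ 2)) + (-ν) := by
    rw [hR2, hγ, hν]; field_simp; ring
  have h2 : Real.exp (L * (-(γ ^ 2))) = t ^ (γ ^ 2) / A0 ^ (γ ^ 2) := by
    rw [hLdef, ← Real.rpow_def_of_pos (by positivity : (0:ℝ) < A0 / t),
      Real.rpow_neg (by positivity), Real.div_rpow hA0.le ht.le]
    rw [inv_div]
  have h3 : t ^ (γ ^ 2 - 1) = t ^ (γ ^ 2) / t := by
    rw [Real.rpow_sub ht, Real.rpow_one]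
  rw [h1, Real.exp_add, h2, h3]
  have hg : γ ^ 2 = ω ^ 2 / (4 * ℓ ^ 2 * σ ^ 2) := by rw [hγ]; field_simp; ring
  have hA0g : (0:ℝ) < A0 ^ (γ ^ 2) := Real.rpow_pos_of_pos hA0 _
  rw [hg]
  set X := I0 (s / (ℓ ^ 2 * σ ^ 2) * R) with hX
  clear_value X
  field_simp
end

section
/- For every x with 0 < x ≤ A0, the CDF of the channel gain admits the exact series representation ∫_0^x f_h(t) dt = e^{−ν} · ∑_{n=0}^∞ (ν^n/(n!)²) · Γ(n+1, γ²·ln(A0/x)), where Γ(n+1, b) = ∫_b^∞ ξ^n e^{−ξ} dξ is the upper incomplete gamma function. -/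
open Real MeasureTheory Set

/-!
Expanding `I0` termwise writes `f_h t` as `e^{-ν} ∑ ν^n/(n!)² · γ² A0^{-γ²} t^{γ²-1} (γ² ln(A0/t))^n`.
The substitution `t = A0 e^{-ξ/γ²}` turns the integral of the `n`-th term over `(0, x]` into
`Γ(n+1, γ² ln(A0/x))`. This is at most `n!`, so the integrated series is dominated by
`∑ ν^n/n!`, which justifies integrating termwise.
-/

section ExpSubstitution

variable {A c x : ℝ}

lemma mul_log_div_mul_exp_neg_div (hA : 0 < A) (hc : c ≠ 0) (ξ : ℝ) :
    c * log (A / (A * exp (-ξ / c))) = ξ := by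
  rw [div_mul_cancel_left₀ hA.ne', ← exp_neg, log_exp]
  field_simp

lemma mul_exp_neg_div_mul_log_div (hA : 0 < A) (hc : c ≠ 0) {t : ℝ} (ht : 0 < t) :
    A * exp (-(c * log (A / t)) / c) = t := by
  rw [neg_div, mul_div_cancel_left₀ _ hc, exp_neg, exp_log (div_pos hA ht)]
  field_simp

lemma strictAnti_mul_exp_neg_div (hA : 0 < A) (hc : 0 < c) :
    StrictAnti fun ξ => A * exp (-ξ / c) := fun _ _ h =>
  mul_lt_mul_of_pos_left (exp_lt_exp.2 (div_lt_div_of_pos_right (neg_lt_neg h) hc)) hA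

lemma image_mul_exp_neg_div_Ioi (hA : 0 < A) (hc : 0 < c) (hx : 0 < x) :
    (fun ξ => A * exp (-ξ / c)) '' Ioi (c * log (A / x)) = Ioo 0 x := by
  ext t
  constructor
  · rintro ⟨ξ, hξ, rfl⟩
    refine ⟨by positivity, ?_⟩
    simpa only [mul_exp_neg_div_mul_log_div hA hc.ne' hx] using
      strictAnti_mul_exp_neg_div hA hc hξ
  · rintro ⟨ht0, htx⟩
    refine ⟨c * log (A / t), ?_, mul_exp_neg_div_mul_log_div hA hc.ne' ht0⟩
    exact mul_lt_mul_of_pos_left (log_lt_log (div_pos hA hx) (by gcongr)) hc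

lemma hasDerivAt_mul_exp_neg_div (ξ : ℝ) :
    HasDerivAt (fun ξ => A * exp (-ξ / c)) (-(A / c * exp (-ξ / c))) ξ := by
  refine ((((hasDerivAt_neg ξ).div_const c).exp).const_mul A).congr_deriv ?_
  ring

lemma abs_deriv_smul_rpow_mul_comp_log (hA : 0 < A) (hc : 0 < c) (g : ℝ → ℝ) (ξ : ℝ) :
    |-(A / c * exp (-ξ / c))| •
        (c / A ^ c * (A * exp (-ξ / c)) ^ (c - 1) * g (c * log (A / (A * exp (-ξ / c)))))
      = g ξ * exp (-ξ) := by
  rw [abs_neg, abs_of_pos (by positivity), mul_log_div_mul_exp_neg_div hA hc.ne', smul_eq_mul,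
    mul_rpow hA.le (exp_pos _).le, ← exp_mul, rpow_sub hA, rpow_one]
  have hexp : exp (-ξ / c) * exp (-ξ / c * (c - 1)) = exp (-ξ) := by
    rw [← exp_add]
    congr 1
    field_simp
    ring
  have hA_c : A ^ c ≠ 0 := (rpow_pos_of_pos hA c).ne'
  calc A / c * exp (-ξ / c) * (c / A ^ c * (A ^ c / A * exp (-ξ / c * (c - 1))) * g ξ)
      = (A / c * (c / A ^ c) * (A ^ c / A)) * (exp (-ξ / c) * exp (-ξ / c * (c - 1))) * g ξ := by
        ring
    _ = g ξ * exp (-ξ) := by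
        rw [hexp]
        field_simp

theorem integral_Ioo_rpow_mul_comp_log (hA : 0 < A) (hc : 0 < c) (hx : 0 < x) (g : ℝ → ℝ) :
    ∫ t in Ioo 0 x, c / A ^ c * t ^ (c - 1) * g (c * log (A / t))
      = ∫ ξ in Ioi (c * log (A / x)), g ξ * exp (-ξ) := by
  rw [← image_mul_exp_neg_div_Ioi hA hc hx,
    integral_image_eq_integral_abs_deriv_smul measurableSet_Ioi
      (fun ξ _ => (hasDerivAt_mul_exp_neg_div ξ).hasDerivWithinAt)
      (strictAnti_mul_exp_neg_div hA hc).injective.injOn]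
  exact setIntegral_congr_fun measurableSet_Ioi fun ξ _ =>
    abs_deriv_smul_rpow_mul_comp_log hA hc g ξ

theorem integrableOn_Ioo_rpow_mul_comp_log_iff (hA : 0 < A) (hc : 0 < c) (hx : 0 < x)
    (g : ℝ → ℝ) :
    IntegrableOn (fun t => c / A ^ c * t ^ (c - 1) * g (c * log (A / t))) (Ioo 0 x)
      ↔ IntegrableOn (fun ξ => g ξ * exp (-ξ)) (Ioi (c * log (A / x))) := by
  rw [← image_mul_exp_neg_div_Ioi hA hc hx,
    integrableOn_image_iff_integrableOn_abs_deriv_smul measurableSet_Ioi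
      (fun ξ _ => (hasDerivAt_mul_exp_neg_div ξ).hasDerivWithinAt)
      (strictAnti_mul_exp_neg_div hA hc).injective.injOn]
  exact integrableOn_congr_fun (fun ξ _ => abs_deriv_smul_rpow_mul_comp_log hA hc g ξ)
    measurableSet_Ioi

end ExpSubstitution

section UpperIncompleteGamma

variable {b : ℝ}

lemma exp_neg_mul_rpow_natCast_add_one_sub_one (n : ℕ) :
    (fun ξ : ℝ => exp (-ξ) * ξ ^ ((n : ℝ) + 1 - 1)) = fun ξ => ξ ^ n * exp (-ξ) := by
  ext ξ
  rw [add_sub_cancel_right, rpow_natCast, mul_comm]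

lemma integral_Ioi_zero_pow_mul_exp_neg (n : ℕ) :
    ∫ ξ in Ioi 0, ξ ^ n * exp (-ξ) = n.factorial := by
  rw [← Gamma_nat_eq_factorial, Gamma_eq_integral (by positivity),
    exp_neg_mul_rpow_natCast_add_one_sub_one]

lemma integrableOn_Ioi_pow_mul_exp_neg (hb : 0 ≤ b) (n : ℕ) :
    IntegrableOn (fun ξ => ξ ^ n * exp (-ξ)) (Ioi b) := by
  have h := GammaIntegral_convergent (s := n + 1) (by positivity)
  rw [exp_neg_mul_rpow_natCast_add_one_sub_one] at h
  exact h.mono_set (Ioi_subset_Ioi hb)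

lemma setIntegral_Ioi_pow_mul_exp_neg_nonneg (hb : 0 ≤ b) (n : ℕ) :
    0 ≤ ∫ ξ in Ioi b, ξ ^ n * exp (-ξ) :=
  setIntegral_nonneg measurableSet_Ioi fun _ hξ =>
    mul_nonneg (pow_nonneg (hb.trans hξ.le) n) (exp_pos _).le

lemma setIntegral_Ioi_pow_mul_exp_neg_le_factorial (hb : 0 ≤ b) (n : ℕ) :
    ∫ ξ in Ioi b, ξ ^ n * exp (-ξ) ≤ n.factorial := by
  rw [← integral_Ioi_zero_pow_mul_exp_neg]
  refine setIntegral_mono_set (integrableOn_Ioi_pow_mul_exp_neg le_rfl n) ?_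
    (Ioi_subset_Ioi hb).eventuallyLE
  filter_upwards [ae_restrict_mem measurableSet_Ioi] with ξ hξ
  exact mul_nonneg (pow_nonneg hξ.le n) (exp_pos _).le

end UpperIncompleteGamma

theorem integral_tsum_of_nonneg {α : Type*} [MeasurableSpace α] {μ : Measure α}
    {F : ℕ → α → ℝ} (hF_nonneg : ∀ n, 0 ≤ᵐ[μ] F n) (hF_int : ∀ n, Integrable (F n) μ)
    (hF_sum : Summable fun n => ∫ a, F n a ∂μ) :
    ∫ a, ∑' n, F n a ∂μ = ∑' n, ∫ a, F n a ∂μ := by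
  refine (integral_tsum_of_summable_integral_norm hF_int ?_).symm
  refine hF_sum.congr fun n => integral_congr_ae ?_
  filter_upwards [hF_nonneg n] with a ha
  exact (norm_of_nonneg ha).symm

theorem integral_Ioc_tsum_rpow_mul_log_pow {A c ν x : ℝ} (hA : 0 < A) (hc : 0 < c)
    (hν : 0 ≤ ν) (hx : 0 < x) (hxA : x ≤ A) :
    ∫ t in Ioc 0 x, ∑' n : ℕ, ν ^ n / (n.factorial : ℝ) ^ 2 *
        (c / A ^ c * t ^ (c - 1) * (c * log (A / t)) ^ n)
      = ∑' n : ℕ, ν ^ n / (n.factorial : ℝ) ^ 2 *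
          ∫ ξ in Ioi (c * log (A / x)), ξ ^ n * exp (-ξ) := by
  have hb : 0 ≤ c * log (A / x) := mul_nonneg hc.le (log_nonneg ((one_le_div hx).2 hxA))
  have hcoeff : ∀ n : ℕ, 0 ≤ ν ^ n / (n.factorial : ℝ) ^ 2 := fun n => by positivity
  have hterm (n : ℕ) : ∫ t in Ioc 0 x, c / A ^ c * t ^ (c - 1) * (c * log (A / t)) ^ n
      = ∫ ξ in Ioi (c * log (A / x)), ξ ^ n * exp (-ξ) := by
    rw [integral_Ioc_eq_integral_Ioo]
    exact integral_Ioo_rpow_mul_comp_log hA hc hx (· ^ n)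
  have hint (n : ℕ) : IntegrableOn (fun t => c / A ^ c * t ^ (c - 1) * (c * log (A / t)) ^ n)
      (Ioc 0 x) := (integrableOn_Ioc_iff_integrableOn_Ioo).2 <|
    (integrableOn_Ioo_rpow_mul_comp_log_iff hA hc hx (· ^ n)).2
      (integrableOn_Ioi_pow_mul_exp_neg hb n)
  have hnonneg (n : ℕ) : ∀ t ∈ Ioc 0 x,
      0 ≤ ν ^ n / (n.factorial : ℝ) ^ 2 * (c / A ^ c * t ^ (c - 1) * (c * log (A / t)) ^ n) := by
    rintro t ⟨ht0, htx⟩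
    have := log_nonneg ((one_le_div ht0).2 (htx.trans hxA))
    positivity
  rw [integral_tsum_of_nonneg (fun n => (ae_restrict_mem measurableSet_Ioc).mono (hnonneg n))
    (fun n => (hint n).const_mul _)]
  · simp_rw [integral_const_mul, hterm]
  · simp_rw [integral_const_mul, hterm]
    refine (summable_pow_div_factorial ν).of_nonneg_of_le
      (fun n => mul_nonneg (hcoeff n) (setIntegral_Ioi_pow_mul_exp_neg_nonneg hb n)) fun n => ?_
    calc ν ^ n / (n.factorial : ℝ) ^ 2 * ∫ ξ in Ioi (c * log (A / x)), ξ ^ n * exp (-ξ)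
        ≤ ν ^ n / (n.factorial : ℝ) ^ 2 * n.factorial :=
          mul_le_mul_of_nonneg_left (setIntegral_Ioi_pow_mul_exp_neg_le_factorial hb n) (hcoeff n)
      _ = ν ^ n / n.factorial := by
          field_simp [Nat.cast_ne_zero.2 n.factorial_ne_zero]

lemma sq_half_jitter_bessel_arg {ω ℓ σ s L : ℝ} (hℓ : 0 < ℓ) (hσ : 0 < σ) (hL : 0 ≤ L) :
    (s / (ℓ ^ 2 * σ ^ 2) * √(ω ^ 2 / 2 * L) / 2) ^ 2
      = s ^ 2 / (2 * ℓ ^ 2 * σ ^ 2) * ((ω / (2 * ℓ * σ)) ^ 2 * L) := by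
  rw [div_pow, mul_pow, sq_sqrt (by positivity)]
  field_simp

theorem gain_cdf_series_general
    (A0 ω ℓ σ s : ℝ) (hA0 : 0 < A0) (hω : 0 < ω) (hℓ : 0 < ℓ) (hσ : 0 < σ)
    (γ ν : ℝ) (hγ : γ = ω / (2 * ℓ * σ)) (hν : ν = s ^ 2 / (2 * ℓ ^ 2 * σ ^ 2))
    (I0 fh : ℝ → ℝ)
    (hI0 : ∀ p, I0 p = ∑' n : ℕ, (p / 2) ^ (2 * n) / ((n.factorial : ℝ)) ^ 2)
    (hfh : ∀ t, 0 < t → t ≤ A0 → fh t =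
      (γ ^ 2 / A0 ^ (γ ^ 2)) * Real.exp (-ν) * t ^ (γ ^ 2 - 1)
        * I0 ((s / (ℓ ^ 2 * σ ^ 2)) * Real.sqrt ((ω ^ 2 / 2) * Real.log (A0 / t)))) :
    ∀ x, 0 < x → x ≤ A0 →
      (∫ t in (0 : ℝ)..x, fh t)
        = Real.exp (-ν) *
            ∑' n : ℕ, (ν ^ n / ((n.factorial : ℝ)) ^ 2) *
              ∫ ξ in Set.Ioi (γ ^ 2 * Real.log (A0 / x)),
                ξ ^ n * Real.exp (-ξ) := by
  intro x hx hxA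
  have hγ2 : 0 < γ ^ 2 := by rw [hγ]; positivity
  have hν0 : 0 ≤ ν := by rw [hν]; positivity
  have hseries : ∀ t ∈ Ioc 0 x, fh t = exp (-ν) * ∑' n : ℕ, ν ^ n / (n.factorial : ℝ) ^ 2 *
      (γ ^ 2 / A0 ^ γ ^ 2 * t ^ (γ ^ 2 - 1) * (γ ^ 2 * log (A0 / t)) ^ n) := by
    rintro t ⟨ht0, htx⟩
    have hL : 0 ≤ log (A0 / t) := log_nonneg ((one_le_div ht0).2 (htx.trans hxA))
    simp_rw [hfh t ht0 (htx.trans hxA), hI0, pow_mul, sq_half_jitter_bessel_arg hℓ hσ hL,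
      ← hγ, ← hν, ← tsum_mul_left]
    congr 1 with n
    rw [mul_pow]
    ring
  rw [intervalIntegral.integral_of_le hx.le, setIntegral_congr_fun measurableSet_Ioc hseries,
    integral_const_mul, integral_Ioc_tsum_rpow_mul_log_pow hA0 hγ2 hν0 hx hxA]

/-- Exact series representation of the channel-gain CDF: for `0 < x ≤ A0`,
`∫_0^x f_h = e^{−ν} ∑_{n} (ν^n/(n!)²) Γ(n+1, γ² ln(A0/x))`, where
`Γ(n+1, b) = ∫_b^∞ ξ^n e^{−ξ} dξ`. -/
theorem gain_cdf_series
    (A0 ω ℓ σ s : ℝ) (hA0 : 0 < A0) (hω : 0 < ω) (hℓ : 0 < ℓ) (hσ : 0 < σ)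
    (hs : 0 ≤ s)
    (γ ν : ℝ) (hγ : γ = ω / (2 * ℓ * σ)) (hν : ν = s ^ 2 / (2 * ℓ ^ 2 * σ ^ 2))
    (I0 fh : ℝ → ℝ)
    (hI0 : ∀ p, I0 p = ∑' n : ℕ, (p / 2) ^ (2 * n) / ((n.factorial : ℝ)) ^ 2)
    (hfh : ∀ t, 0 < t → t ≤ A0 → fh t =
      (γ ^ 2 / A0 ^ (γ ^ 2)) * Real.exp (-ν) * t ^ (γ ^ 2 - 1)
        * I0 ((s / (ℓ ^ 2 * σ ^ 2)) * Real.sqrt ((ω ^ 2 / 2) * Real.log (A0 / t)))) :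
    ∀ x, 0 < x → x ≤ A0 →
      (∫ t in (0 : ℝ)..x, fh t)
        = Real.exp (-ν) *
            ∑' n : ℕ, (ν ^ n / ((n.factorial : ℝ)) ^ 2) *
              ∫ ξ in Set.Ioi (γ ^ 2 * Real.log (A0 / x)),
                ξ ^ n * Real.exp (-ξ) :=
  gain_cdf_series_general A0 ω ℓ σ s hA0 hω hℓ hσ γ ν hγ hν I0 fh hI0 hfh
end

section
/- For every x with 0 < x ≤ A0, letting R_x = √((ω²/2)·ln(A0/x)), the tail probability of the Rician pointing-error radius admits the exact series representation ∫_{R_x}^∞ f_r(r) dr = e^{−ν} · ∑_{n=0}^∞ (ν^n/(n!)²) · Γ(n+1, γ²·ln(A0/x)), where Γ(n+1, b) = ∫_b^∞ ξ^n e^{−ξ} dξ is the upper incomplete gamma function. -/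
/-!
Expanding `I0` as a power series writes the Rician density as `e^{-ν}` times a series of terms
`(ν^n/(n!)²) (r/C) ξ^n e^{-ξ}` in the variable `ξ = r²/(2C)`, `C = ℓ²σ²`. The substitution
`ξ = r²/(2C)` has Jacobian `r/C`, so it turns the tail integral over `r > R_x` into an integral over
`ξ > R_x²/(2C) = γ² ln(A0/x)`, and the series may be integrated termwise because the tail Gamma
integrals are bounded by `n!`, which makes the series of integrals dominated by `∑ ν^n/n! = e^ν`.
-/

open Real MeasureTheory Set Filter

open scoped Nat

section Substitution

variable {C R : ℝ}

lemma strictMonoOn_sq_div (hC : 0 < C) (hR : 0 ≤ R) :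
    StrictMonoOn (fun r : ℝ => r ^ 2 / (2 * C)) (Ici R) := fun a ha b hb hab => by
  have ha0 : 0 ≤ a := hR.trans ha
  dsimp only
  gcongr

lemma image_Ioi_sq_div (hC : 0 < C) (hR : 0 ≤ R) :
    (fun r : ℝ => r ^ 2 / (2 * C)) '' Ioi R = Ioi (R ^ 2 / (2 * C)) :=
  ContinuousOn.image_Ioi_of_strictMonoOn (by fun_prop) (strictMonoOn_sq_div hC hR)
    ((tendsto_pow_atTop two_ne_zero).atTop_div_const (by positivity))

lemma integral_Ioi_mul_comp_sq_div (hC : 0 < C) (hR : 0 ≤ R) (g : ℝ → ℝ) :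
    ∫ r in Ioi R, (r / C) * g (r ^ 2 / (2 * C)) = ∫ ξ in Ioi (R ^ 2 / (2 * C)), g ξ := by
  have hderiv : ∀ r ∈ Ioi R, HasDerivWithinAt (fun r : ℝ => r ^ 2 / (2 * C)) (r / C) (Ioi R) r :=
    fun r _ => ((hasDerivAt_pow 2 r).div_const (2 * C)).hasDerivWithinAt.congr_deriv
      (by field_simp; norm_num)
  rw [← image_Ioi_sq_div hC hR, integral_image_eq_integral_abs_deriv_smul measurableSet_Ioi hderiv
    ((strictMonoOn_sq_div hC hR).injOn.mono Ioi_subset_Ici_self)]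
  refine setIntegral_congr_fun measurableSet_Ioi fun r hr => ?_
  have hr0 : 0 ≤ r := hR.trans (le_of_lt hr)
  rw [smul_eq_mul, abs_of_nonneg (by positivity)]

end Substitution

section IncompleteGamma

variable {b : ℝ}

lemma integrableOn_pow_mul_exp_neg_Ioi (n : ℕ) (hb : 0 ≤ b) :
    IntegrableOn (fun ξ : ℝ => ξ ^ n * exp (-ξ)) (Ioi b) := by
  refine IntegrableOn.mono_set ?_ (Ioi_subset_Ioi hb)
  refine (GammaIntegral_convergent (s := n + 1) (by positivity)).congr_fun (fun ξ _ => ?_)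
    measurableSet_Ioi
  simp only [add_sub_cancel_right, rpow_natCast, mul_comm]

lemma integral_pow_mul_exp_neg_Ioi_zero (n : ℕ) :
    ∫ ξ in Ioi (0 : ℝ), ξ ^ n * exp (-ξ) = n ! := by
  rw [← Gamma_nat_eq_factorial, ← Nat.cast_add_one, Gamma_eq_integral (by positivity)]
  refine setIntegral_congr_fun measurableSet_Ioi fun ξ _ => ?_
  simp only [Nat.cast_add_one, add_sub_cancel_right, rpow_natCast, mul_comm]

lemma integral_pow_mul_exp_neg_Ioi_le_factorial (n : ℕ) (hb : 0 ≤ b) :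
    ∫ ξ in Ioi b, ξ ^ n * exp (-ξ) ≤ n ! := by
  rw [← integral_pow_mul_exp_neg_Ioi_zero]
  refine setIntegral_mono_set (integrableOn_pow_mul_exp_neg_Ioi n le_rfl) ?_
    (Eventually.of_forall (Ioi_subset_Ioi hb))
  filter_upwards [ae_restrict_mem measurableSet_Ioi] with ξ (hξ : 0 < ξ)
  positivity

lemma integral_Ioi_tsum_mul_pow_mul_exp_neg (c : ℕ → ℝ) (hc : Summable fun n => |c n| * n !)
    (hb : 0 ≤ b) :
    ∫ ξ in Ioi b, ∑' n, c n * (ξ ^ n * exp (-ξ))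
      = ∑' n, c n * ∫ ξ in Ioi b, ξ ^ n * exp (-ξ) := by
  have hnorm : ∀ n, ∫ ξ in Ioi b, ‖c n * (ξ ^ n * exp (-ξ))‖
      = |c n| * ∫ ξ in Ioi b, ξ ^ n * exp (-ξ) := fun n => by
    rw [← integral_const_mul]
    refine setIntegral_congr_fun measurableSet_Ioi fun ξ (hξ : b < ξ) => ?_
    have hξ0 : 0 ≤ ξ := hb.trans hξ.le
    rw [norm_mul, Real.norm_eq_abs, norm_of_nonneg (by positivity : 0 ≤ ξ ^ n * exp (-ξ))]
  have hsum : Summable fun n => ∫ ξ in Ioi b, ‖c n * (ξ ^ n * exp (-ξ))‖ := by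
    refine hc.of_nonneg_of_le (fun n => integral_nonneg fun ξ => norm_nonneg _) fun n => ?_
    rw [hnorm]
    exact mul_le_mul_of_nonneg_left (integral_pow_mul_exp_neg_Ioi_le_factorial n hb) (abs_nonneg _)
  simp_rw [← integral_const_mul]
  exact (integral_tsum_of_summable_integral_norm
    (fun n => (integrableOn_pow_mul_exp_neg_Ioi n hb).const_mul (c n)) hsum).symm

end IncompleteGamma

lemma rician_density_eq_tsum (C s r : ℝ) (hC : C ≠ 0) :
    (r / C) * exp (-((r ^ 2 + s ^ 2) / (2 * C))) *
        ∑' n : ℕ, (r * s / C / 2) ^ (2 * n) / (n ! : ℝ) ^ 2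
      = exp (-(s ^ 2 / (2 * C))) * ((r / C) * ∑' n : ℕ, ((s ^ 2 / (2 * C)) ^ n / (n ! : ℝ) ^ 2) *
          ((r ^ 2 / (2 * C)) ^ n * exp (-(r ^ 2 / (2 * C))))) := by
  rw [← tsum_mul_left, ← tsum_mul_left, ← tsum_mul_left]
  refine tsum_congr fun n => ?_
  have hexp : exp (-((r ^ 2 + s ^ 2) / (2 * C)))
      = exp (-(s ^ 2 / (2 * C))) * exp (-(r ^ 2 / (2 * C))) := by
    rw [← exp_add]
    ring_nf
  have hpow : (r * s / C / 2) ^ (2 * n) = (s ^ 2 / (2 * C)) ^ n * (r ^ 2 / (2 * C)) ^ n := by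
    rw [← mul_pow, pow_mul]
    congr 1
    field_simp
  rw [hexp, hpow]
  ring

theorem rician_tail_series_general
    (A0 ω ℓ σ s : ℝ) (hℓ : 0 < ℓ) (hσ : 0 < σ)
    (γ ν : ℝ) (hγ : γ = ω / (2 * ℓ * σ)) (hν : ν = s ^ 2 / (2 * ℓ ^ 2 * σ ^ 2))
    (I0 fr : ℝ → ℝ)
    (hI0 : ∀ p, I0 p = ∑' n : ℕ, (p / 2) ^ (2 * n) / ((n.factorial : ℝ)) ^ 2)
    (hfr : ∀ r, 0 ≤ r → fr r =
      (r / (ℓ ^ 2 * σ ^ 2)) * Real.exp (-((r ^ 2 + s ^ 2) / (2 * ℓ ^ 2 * σ ^ 2)))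
        * I0 (r * s / (ℓ ^ 2 * σ ^ 2))) :
    ∀ x, 0 < x → x ≤ A0 →
      (∫ r in Set.Ioi (Real.sqrt ((ω ^ 2 / 2) * Real.log (A0 / x))), fr r)
        = Real.exp (-ν) *
            ∑' n : ℕ, (ν ^ n / ((n.factorial : ℝ)) ^ 2) *
              ∫ ξ in Set.Ioi (γ ^ 2 * Real.log (A0 / x)),
                ξ ^ n * Real.exp (-ξ) := by
  intro x hx hxA
  set C := ℓ ^ 2 * σ ^ 2
  have hC : 0 < C := by positivity
  rw [mul_assoc 2 (ℓ ^ 2)] at hfr hν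
  have hlog : 0 ≤ log (A0 / x) := log_nonneg ((one_le_div hx).mpr hxA)
  set R := √((ω ^ 2 / 2) * log (A0 / x))
  have hR : 0 ≤ R := sqrt_nonneg _
  have hRγ : R ^ 2 / (2 * C) = γ ^ 2 * log (A0 / x) := by
    rw [sq_sqrt (by positivity), hγ]
    field_simp
    ring
  have hcoeff : Summable fun n : ℕ => |ν ^ n / (n ! : ℝ) ^ 2| * n ! := by
    refine (summable_pow_div_factorial ν).congr fun n => ?_
    rw [abs_of_nonneg (by rw [hν]; positivity)]
    field_simp
  calc (∫ r in Ioi R, fr r)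
      = ∫ r in Ioi R, exp (-ν) * ((r / C) * ∑' n : ℕ, (ν ^ n / (n ! : ℝ) ^ 2) *
          ((r ^ 2 / (2 * C)) ^ n * exp (-(r ^ 2 / (2 * C))))) :=
        setIntegral_congr_fun measurableSet_Ioi fun r hr => by
          rw [hfr r (hR.trans (le_of_lt hr)), hI0, hν, rician_density_eq_tsum C s r hC.ne']
    _ = exp (-ν) * ∑' n : ℕ, (ν ^ n / (n ! : ℝ) ^ 2) *
          ∫ ξ in Ioi (γ ^ 2 * log (A0 / x)), ξ ^ n * exp (-ξ) := by
        rw [integral_const_mul, integral_Ioi_mul_comp_sq_div hC hR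
          (fun ξ => ∑' n : ℕ, (ν ^ n / (n ! : ℝ) ^ 2) * (ξ ^ n * exp (-ξ))), hRγ,
          integral_Ioi_tsum_mul_pow_mul_exp_neg _ hcoeff (by positivity)]

/-- Exact series representation of the Rician tail probability: for `0 < x ≤ A0`,
with `R_x = √((ω²/2) ln(A0/x))`,
`∫_{R_x}^∞ f_r = e^{−ν} ∑_{n} (ν^n/(n!)²) Γ(n+1, γ² ln(A0/x))`. -/
theorem rician_tail_series
    (A0 ω ℓ σ s : ℝ) (hA0 : 0 < A0) (hω : 0 < ω) (hℓ : 0 < ℓ) (hσ : 0 < σ)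
    (hs : 0 ≤ s)
    (γ ν : ℝ) (hγ : γ = ω / (2 * ℓ * σ)) (hν : ν = s ^ 2 / (2 * ℓ ^ 2 * σ ^ 2))
    (I0 fr : ℝ → ℝ)
    (hI0 : ∀ p, I0 p = ∑' n : ℕ, (p / 2) ^ (2 * n) / ((n.factorial : ℝ)) ^ 2)
    (hfr : ∀ r, 0 ≤ r → fr r =
      (r / (ℓ ^ 2 * σ ^ 2)) * Real.exp (-((r ^ 2 + s ^ 2) / (2 * ℓ ^ 2 * σ ^ 2)))
        * I0 (r * s / (ℓ ^ 2 * σ ^ 2))) :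
    ∀ x, 0 < x → x ≤ A0 →
      (∫ r in Set.Ioi (Real.sqrt ((ω ^ 2 / 2) * Real.log (A0 / x))), fr r)
        = Real.exp (-ν) *
            ∑' n : ℕ, (ν ^ n / ((n.factorial : ℝ)) ^ 2) *
              ∫ ξ in Set.Ioi (γ ^ 2 * Real.log (A0 / x)),
                ξ ^ n * Real.exp (-ξ) :=
  rician_tail_series_general A0 ω ℓ σ s hℓ hσ γ ν hγ hν I0 fr hI0 hfr
end

section
/- The channel-gain density integrates to one: ∫_0^{A0} f_h(t) dt = 1; i.e., f_h is a probability density on (0, A0]. -/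
/-! The substitution `t = A0 * exp (-u)` turns `f_h(t) dt` on `(0, A0]` into
`γ² e^{-ν} e^{-γ² u} I0 (2 √(ν γ² u)) du` on `(0, ∞)`. Expanding `I0` in its power series and
integrating term by term with `∫₀^∞ uⁿ e^{-γ² u} du = n! / γ^{2(n+1)}` leaves
`e^{-ν} ∑ νⁿ / n! = 1`. -/

open Real MeasureTheory

open Set Nat

lemma integral_Ioi_pow_mul_exp_neg_mul (n : ℕ) {k : ℝ} (hk : 0 < k) :
    ∫ u in Ioi 0, u ^ n * exp (-(k * u)) = n ! / k ^ (n + 1) := by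
  have h := integral_rpow_mul_exp_neg_mul_Ioi (a := n + 1) (by positivity) hk
  rw [add_sub_cancel_right, Real.Gamma_nat_eq_factorial, ← Nat.cast_succ, Real.rpow_natCast,
    one_div, inv_pow, inv_mul_eq_div] at h
  rw [← h]
  exact setIntegral_congr_fun measurableSet_Ioi fun u _ => by rw [Real.rpow_natCast]

lemma integrableOn_Ioi_pow_mul_exp_neg_mul (n : ℕ) {k : ℝ} (hk : 0 < k) :
    IntegrableOn (fun u => u ^ n * exp (-(k * u))) (Ioi 0) :=
  Integrable.of_integral_ne_zero (by rw [integral_Ioi_pow_mul_exp_neg_mul n hk]; positivity)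

/-- The series is `I0 (2 * √(c * u))`, so this is the Laplace transform of that Bessel function. -/
lemma integral_Ioi_exp_neg_mul_mul_tsum {k c : ℝ} (hk : 0 < k) (hc : 0 ≤ c) :
    ∫ u in Ioi 0, exp (-(k * u)) * ∑' n : ℕ, (c * u) ^ n / (n ! : ℝ) ^ 2 = exp (c / k) / k := by
  set F : ℕ → ℝ → ℝ := fun n u => c ^ n / (n ! : ℝ) ^ 2 * (u ^ n * exp (-(k * u))) with hF
  have hF_int (n : ℕ) : ∫ u in Ioi 0, F n u = (c / k) ^ n / n ! / k := by
    rw [integral_const_mul, integral_Ioi_pow_mul_exp_neg_mul n hk, div_pow]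
    field_simp
    ring
  have hF_sum : HasSum (fun n => ∫ u in Ioi 0, F n u) (exp (c / k) / k) := by
    simpa only [hF_int, Real.exp_eq_exp_ℝ] using
      (NormedSpace.expSeries_div_hasSum_exp (c / k)).div_const k
  have hF_norm (n : ℕ) : ∫ u in Ioi 0, ‖F n u‖ = ∫ u in Ioi 0, F n u :=
    setIntegral_congr_fun measurableSet_Ioi fun u (hu : 0 < u) => norm_of_nonneg (by positivity)
  have hF_integrable (n : ℕ) : IntegrableOn (F n) (Ioi 0) :=
    (integrableOn_Ioi_pow_mul_exp_neg_mul n hk).const_mul _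
  rw [← (hasSum_integral_of_summable_integral_norm hF_integrable
    (by simpa only [hF_norm] using hF_sum.summable)).unique hF_sum]
  refine setIntegral_congr_fun measurableSet_Ioi fun u _ => ?_
  rw [← tsum_mul_left]
  exact tsum_congr fun n => by rw [hF, mul_pow]; ring

lemma image_mul_exp_neg_Ici {A : ℝ} (hA : 0 < A) :
    (fun u => A * exp (-u)) '' Ici 0 = Ioc 0 A := by
  ext t
  constructor
  · rintro ⟨u, hu, rfl⟩
    exact ⟨by positivity, mul_le_of_le_one_right hA.le (exp_le_one_iff.mpr (by simpa using hu))⟩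
  · rintro ⟨ht0, htA⟩
    refine ⟨log (A / t), log_nonneg ((one_le_div ht0).mpr htA), ?_⟩
    show A * exp (-log (A / t)) = t
    rw [exp_neg, exp_log (div_pos hA ht0)]
    field_simp

lemma integral_Ioc_rpow_mul_comp_log_div {A : ℝ} (hA : 0 < A) (k : ℝ) (g : ℝ → ℝ) :
    ∫ t in Ioc 0 A, t ^ (k - 1) * g (log (A / t)) = A ^ k * ∫ u in Ioi 0, exp (-(k * u)) * g u := by
  have hderiv : ∀ u ∈ Ici (0 : ℝ),
      HasDerivWithinAt (fun u => A * exp (-u)) (-(A * exp (-u))) (Ici 0) u := fun u _ => by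
    simpa using ((hasDerivAt_neg u).exp.const_mul A).hasDerivWithinAt
  have hinj : InjOn (fun u => A * exp (-u)) (Ici 0) := fun a _ b _ h =>
    neg_injective (exp_injective (mul_left_cancel₀ hA.ne' h))
  rw [← image_mul_exp_neg_Ici hA, integral_image_eq_integral_abs_deriv_smul measurableSet_Ici
    hderiv hinj, integral_Ici_eq_integral_Ioi, ← integral_const_mul]
  refine setIntegral_congr_fun measurableSet_Ioi fun u _ => ?_
  have hlog : log (A / (A * exp (-u))) = u := by
    rw [div_mul_cancel_left₀ hA.ne', ← exp_neg, neg_neg, log_exp]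
  have hpow : A * exp (-u) * (A * exp (-u)) ^ (k - 1) = A ^ k * exp (-(k * u)) := by
    rw [mul_comm, ← rpow_add_one (by positivity), sub_add_cancel, mul_rpow hA.le (exp_pos _).le,
      ← exp_mul]
    ring_nf
  rw [smul_eq_mul, hlog, abs_neg, abs_of_pos (by positivity), ← mul_assoc, hpow, mul_assoc]

theorem gain_density_integrates_to_one_general
    (A0 ω ℓ σ s : ℝ) (hA0 : 0 < A0) (hω : 0 < ω) (hℓ : 0 < ℓ) (hσ : 0 < σ)
    (γ ν : ℝ) (hγ : γ = ω / (2 * ℓ * σ)) (hν : ν = s ^ 2 / (2 * ℓ ^ 2 * σ ^ 2))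
    (I0 fh : ℝ → ℝ)
    (hI0 : ∀ p, I0 p = ∑' n : ℕ, (p / 2) ^ (2 * n) / ((n.factorial : ℝ)) ^ 2)
    (hfh : ∀ t, 0 < t → t ≤ A0 → fh t =
      (γ ^ 2 / A0 ^ (γ ^ 2)) * Real.exp (-ν) * t ^ (γ ^ 2 - 1)
        * I0 ((s / (ℓ ^ 2 * σ ^ 2)) * Real.sqrt ((ω ^ 2 / 2) * Real.log (A0 / t)))) :
    (∫ t in (0 : ℝ)..A0, fh t) = 1 := by
  have hγ0 : γ ≠ 0 := by rw [hγ]; positivity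
  have hk : 0 < γ ^ 2 := by positivity
  have hν0 : 0 ≤ ν := by rw [hν]; positivity
  set g : ℝ → ℝ := fun u => ∑' n : ℕ, (ν * γ ^ 2 * u) ^ n / (n ! : ℝ) ^ 2
  have hfh_eq : ∀ t ∈ Ioc 0 A0,
      fh t = γ ^ 2 / A0 ^ γ ^ 2 * exp (-ν) * (t ^ (γ ^ 2 - 1) * g (log (A0 / t))) := by
    rintro t ⟨ht0, htA⟩
    have hlog : 0 ≤ log (A0 / t) := log_nonneg ((one_le_div ht0).mpr htA)
    have harg : (s / (ℓ ^ 2 * σ ^ 2) * √(ω ^ 2 / 2 * log (A0 / t)) / 2) ^ 2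
        = ν * γ ^ 2 * log (A0 / t) := by
      rw [div_pow, mul_pow, sq_sqrt (by positivity), hν, hγ]
      field_simp
    simp only [hfh t ht0 htA, hI0, pow_mul, harg, g, mul_assoc]
  rw [intervalIntegral.integral_of_le hA0.le, setIntegral_congr_fun measurableSet_Ioc hfh_eq,
    integral_const_mul, integral_Ioc_rpow_mul_comp_log_div hA0,
    integral_Ioi_exp_neg_mul_mul_tsum hk (by positivity), mul_div_cancel_right₀ _ hk.ne',
    exp_neg]
  field_simp

/-- The channel-gain density integrates to one on `(0, A0]`:
`∫_0^{A0} f_h(t) dt = 1`. -/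
theorem gain_density_integrates_to_one
    (A0 ω ℓ σ s : ℝ) (hA0 : 0 < A0) (hω : 0 < ω) (hℓ : 0 < ℓ) (hσ : 0 < σ)
    (hs : 0 ≤ s)
    (γ ν : ℝ) (hγ : γ = ω / (2 * ℓ * σ)) (hν : ν = s ^ 2 / (2 * ℓ ^ 2 * σ ^ 2))
    (I0 fh : ℝ → ℝ)
    (hI0 : ∀ p, I0 p = ∑' n : ℕ, (p / 2) ^ (2 * n) / ((n.factorial : ℝ)) ^ 2)
    (hfh : ∀ t, 0 < t → t ≤ A0 → fh t =
      (γ ^ 2 / A0 ^ (γ ^ 2)) * Real.exp (-ν) * t ^ (γ ^ 2 - 1)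
        * I0 ((s / (ℓ ^ 2 * σ ^ 2)) * Real.sqrt ((ω ^ 2 / 2) * Real.log (A0 / t)))) :
    (∫ t in (0 : ℝ)..A0, fh t) = 1 :=
  gain_density_integrates_to_one_general A0 ω ℓ σ s hA0 hω hℓ hσ γ ν hγ hν I0 fh hI0 hfh
end
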